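/- Let Γ be a linearly ordered additive abelian group, k a field, and q a prime number with (q : k) ≠ 0. Let v := HahnSeries.addVal denote the canonical additive valuation on HahnSeries Γ k with values in WithTop Γ (so v(x) is the order of x for x ≠ 0). Then for every nonzero c ∈ HahnSeries Γ k, the following are equivalent: (i) c is a q-th power in HahnSeries Γ k, i.e., there exists e with e^q = c; (ii) there exists d ∈ HahnSeries Γ k with v(c − d^q) > v(c). -/

import Mathlib

/-!
Write `c = d ^ q * (1 + ε)` with `ε = (c - d ^ q) / d ^ q`; the hypothesis `v(c - d ^ q) > v(c)`
says exactly that `ε` has positive order. Since `q` is invertible in `k`, Hensel's lemma gives a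
power series `f` with `f ^ q = 1 + X`, and substituting `ε` for `X` yields `(d * f(ε)) ^ q = c`.
-/

open PowerSeries

theorem PowerSeries.exists_pow_eq_one_add_X {R : Type*} [CommRing R] {q : ℕ}
    (hq : IsUnit (q : R)) : ∃ a : PowerSeries R, a ^ q = 1 + X := by
  obtain rfl | hq0 := eq_or_ne q 0
  · have : Subsingleton R := subsingleton_of_zero_eq_one (isUnit_zero_iff.mp (by simpa using hq))
    exact ⟨0, Subsingleton.elim _ _⟩
  -- Hensel's lemma for `T ^ q - (1 + X)` at the approximate root `1`: the derivative there is `q`.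
  obtain ⟨a, ha, -⟩ := HenselianRing.is_henselian (I := Ideal.span {(X : PowerSeries R)})
    (Polynomial.X ^ q - Polynomial.C (1 + X)) (Polynomial.monic_X_pow_sub_C _ hq0) 1
    (by simp)
    (by simpa [Polynomial.derivative_X_pow] using (hq.map C).map (Ideal.Quotient.mk _))
  exact ⟨a, by simpa [sub_eq_zero] using ha⟩

theorem HahnSeries.exists_pow_eq_one_add_of_orderTop_pos {Γ R : Type*} [AddCommMonoid Γ]
    [LinearOrder Γ] [IsOrderedCancelAddMonoid Γ] [CommRing R] {q : ℕ} (hq : IsUnit (q : R))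
    {ε : HahnSeries Γ R} (hε : 0 < ε.orderTop) : ∃ a : HahnSeries Γ R, a ^ q = 1 + ε := by
  obtain ⟨f, hf⟩ := PowerSeries.exists_pow_eq_one_add_X hq
  exact ⟨heval ε f, by rw [← map_pow, hf, map_add, map_one, heval_X ε hε]⟩

theorem AddValuation.pos_map_sub_div_of_lt {K Γ₀ : Type*} [Field K]
    [LinearOrderedAddCommGroupWithTop Γ₀]
    (v : AddValuation K Γ₀) {b c : K} (h : v c < v (c - b)) : 0 < v ((c - b) / b) := by
  have hb : v b = v c := v.map_eq_of_lt_sub (by rwa [v.map_sub_swap])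
  rw [v.map_div, hb, LinearOrderedAddCommGroupWithTop.sub_pos]
  exact Or.inl h

theorem hahnSeries_qth_power_iff_general (Γ : Type*) [AddCommGroup Γ] [LinearOrder Γ] [IsOrderedAddMonoid Γ]
    (k : Type*) [Field k] (q : ℕ) (hk : (q : k) ≠ 0)
    (c : HahnSeries Γ k) (hc : c ≠ 0) :
    (∃ e : HahnSeries Γ k, e ^ q = c) ↔
      ∃ d : HahnSeries Γ k,
        HahnSeries.addVal Γ k c < HahnSeries.addVal Γ k (c - d ^ q) := by
  constructor
  · rintro ⟨e, rfl⟩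
    refine ⟨e, ?_⟩
    rw [sub_self, AddValuation.map_zero, lt_top_iff_ne_top, AddValuation.ne_top_iff]
    exact hc
  · rintro ⟨d, hd⟩
    have hdq : d ^ q ≠ 0 := by
      intro h
      simp [h] at hd
    obtain ⟨a, ha⟩ := HahnSeries.exists_pow_eq_one_add_of_orderTop_pos hk.isUnit
      (ε := (c - d ^ q) / d ^ q) (by
        simpa only [HahnSeries.addVal_apply] using (HahnSeries.addVal Γ k).pos_map_sub_div_of_lt hd)
    refine ⟨d * a, ?_⟩
    rw [mul_pow, ha, mul_add, mul_one, mul_div_cancel₀ _ hdq, add_sub_cancel]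

/-- The key equivalence in the proof of Lemma 4.7, for the full Hahn series field: for a
prime `q` with `(q : k) ≠ 0` and a nonzero Hahn series `c`, `c` is a `q`-th power if and
only if there is `d` with `v(c - d^q) > v(c)`, where `v` is the canonical additive
valuation on `HahnSeries Γ k`. -/
theorem hahnSeries_qth_power_iff (Γ : Type*) [AddCommGroup Γ] [LinearOrder Γ] [IsOrderedAddMonoid Γ]
    (k : Type*) [Field k] (q : ℕ) (hq : q.Prime) (hk : (q : k) ≠ 0)
    (c : HahnSeries Γ k) (hc : c ≠ 0) :
    (∃ e : HahnSeries Γ k, e ^ q = c) ↔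
      ∃ d : HahnSeries Γ k,
        HahnSeries.addVal Γ k c < HahnSeries.addVal Γ k (c - d ^ q) :=
  hahnSeries_qth_power_iff_general Γ k q hk c hc
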